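/- Let |a⟩,|a'⟩ be an orthonormal basis of ℂ² with ⟨0|a⟩ ≠ 0 and ⟨1|a⟩ ≠ 0. If A is a 2×2 complex matrix such that the eight states A|0⟩⊗|0,0⟩, A|a⟩⊗|1,0⟩, A|a'⟩⊗|1,0⟩, A|0⟩⊗|b,1⟩, A|0⟩⊗|b',1⟩, A|1⟩⊗|0,c⟩, A|1⟩⊗|0,c'⟩, A|1⟩⊗|1,1⟩ are pairwise orthogonal (where {|b⟩,|b'⟩} and {|c⟩,|c'⟩} are orthonormal bases of ℂ² neither containing |0⟩ or |1⟩), then A†A is a scalar multiple of the identity. -/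

import Mathlib

open scoped ComplexInnerProductSpace Matrix
noncomputable section
/-- A qubit state space `ℂ²`. -/
abbrev Qubit := EuclideanSpace ℂ (Fin 2)
/-- The standard basis vector `|0⟩`. -/
def e0 : Qubit := EuclideanSpace.single 0 1
/-- The standard basis vector `|1⟩`. -/
def e1 : Qubit := EuclideanSpace.single 1 1
/-- `OB a a'` means `{a, a'}` is an orthonormal basis of `ℂ²`. -/
def OB (a a' : Qubit) : Prop := ⟪a, a⟫ = 1 ∧ ⟪a', a'⟫ = 1 ∧ ⟪a, a'⟫ = 0
/-- The two-qubit product state `a ⊗ b`. -/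
def prod2 (a b : Qubit) : EuclideanSpace ℂ (Fin 2 × Fin 2) := WithLp.toLp 2 (fun p => a p.1 * b p.2)
/-- The three-qubit product state `a ⊗ b ⊗ c`. -/
def prod3 (a b c : Qubit) : EuclideanSpace ℂ (Fin 2 × Fin 2 × Fin 2) :=
  WithLp.toLp 2 (fun p => a p.1 * b p.2.1 * c p.2.2)
/-- The four-qubit product state `a ⊗ b ⊗ c ⊗ d`. -/
def prod4 (a b c d : Qubit) : EuclideanSpace ℂ (Fin 2 × Fin 2 × Fin 2 × Fin 2) :=
  WithLp.toLp 2 (fun p => a p.1 * b p.2.1 * c p.2.2.1 * d p.2.2.2)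
/-- Apply a `2 × 2` matrix to a qubit state. -/
def appM (A : Matrix (Fin 2) (Fin 2) ℂ) (v : Qubit) : Qubit := WithLp.toLp 2 (fun i => ∑ j, A i j * v j)

/-!
With `M = A†A`, the inner product of two of the eight states factors as `⟨x|M|y⟩` times the
inner products of the last two tensor factors. The pair `A|0⟩⊗|0,0⟩`, `A|1⟩⊗|0,c⟩` gives
`M₀₁ ⟨0|c⟩ = 0`, so the Hermitian `M` is diagonal. The pair `A|a⟩⊗|1,0⟩`, `A|a'⟩⊗|1,0⟩` then gives
`0 = ⟨a|M|a'⟩ = ā₀ a'₀ (M₀₀ - M₁₁)` because `⟨a|a'⟩ = 0`, and `ā₀ a'₀ ≠ 0`.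
-/

lemma inner_prod3 (u v w u' v' w' : Qubit) :
    ⟪prod3 u v w, prod3 u' v' w'⟫ = ⟪u, u'⟫ * ⟪v, v'⟫ * ⟪w, w'⟫ := by
  simp only [prod3, PiLp.inner_apply, RCLike.inner_apply, map_mul, Fintype.sum_prod_type,
    Fin.sum_univ_two]
  ring

lemma inner_appM_appM (A : Matrix (Fin 2) (Fin 2) ℂ) (u v : Qubit) :
    ⟪appM A u, appM A v⟫ = star u.ofLp ⬝ᵥ ((Aᴴ * A) *ᵥ v.ofLp) := by
  change (A *ᵥ v.ofLp) ⬝ᵥ star (A *ᵥ u.ofLp) = _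
  rw [Matrix.star_mulVec, dotProduct_comm, ← Matrix.dotProduct_mulVec, Matrix.mulVec_mulVec]

lemma Matrix.eq_smul_one_of_dotProduct_mulVec_eq_zero {M : Matrix (Fin 2) (Fin 2) ℂ}
    (hM : M.IsHermitian) (h01 : M 0 1 = 0) {u v : Fin 2 → ℂ} (hu : u 0 ≠ 0) (hv : v 0 ≠ 0)
    (huv : star u ⬝ᵥ v = 0) (huMv : star u ⬝ᵥ (M *ᵥ v) = 0) : M = M 0 0 • 1 := by
  have h10 : M 1 0 = 0 := by simpa [h01] using (hM.apply 1 0).symm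
  simp only [dotProduct, Matrix.mulVec, Fin.sum_univ_two, h01, h10, Pi.star_apply] at huv huMv
  have : star (u 0) * v 0 * (M 0 0 - M 1 1) = 0 := by linear_combination huMv - M 1 1 * huv
  have h00 : M 0 0 = M 1 1 := by simpa [sub_eq_zero, hu, hv] using this
  ext i j
  fin_cases i <;> fin_cases j <;> simp [h01, h10, h00]

lemma OB.inner_e0_right_ne_zero {a a' : Qubit} (h : OB a a') (ha1 : ⟪e1, a⟫ ≠ 0) :
    ⟪e0, a'⟫ ≠ 0 := by
  obtain ⟨-, ha'a', haa'⟩ := h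
  simp only [e0, e1, EuclideanSpace.inner_single_left, map_one, one_mul] at ha1 ⊢
  intro ha'0
  simp only [PiLp.inner_apply, RCLike.inner_apply, Fin.sum_univ_two, ha'0] at haa' ha'a'
  have ha'1 : a' 1 = 0 := by simpa [ha1] using haa'
  simp [ha'1] at ha'a'

theorem orthogonality_forces_scalar_POVM
    (A : Matrix (Fin 2) (Fin 2) ℂ) (a a' b b' c c' : Qubit)
    (ha : OB a a')
    (ha0 : ⟪e0, a⟫ ≠ 0) (ha1 : ⟪e1, a⟫ ≠ 0)
    (hcne : ∀ v ∈ ({c, c'} : Set Qubit), ⟪e0, v⟫ ≠ 0 ∧ ⟪e1, v⟫ ≠ 0)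
    (horth : ∀ j k : Fin 8, j ≠ k →
      ⟪![prod3 (appM A e0) e0 e0, prod3 (appM A a) e1 e0, prod3 (appM A a') e1 e0,
          prod3 (appM A e0) b e1, prod3 (appM A e0) b' e1, prod3 (appM A e1) e0 c,
          prod3 (appM A e1) e0 c', prod3 (appM A e1) e1 e1] j,
        ![prod3 (appM A e0) e0 e0, prod3 (appM A a) e1 e0, prod3 (appM A a') e1 e0,
          prod3 (appM A e0) b e1, prod3 (appM A e0) b' e1, prod3 (appM A e1) e0 c,
          prod3 (appM A e1) e0 c', prod3 (appM A e1) e1 e1] k⟫ = 0) :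
    ∃ κ : ℂ, Aᴴ * A = κ • (1 : Matrix (Fin 2) (Fin 2) ℂ) := by
  have hc0 : ⟪e0, c⟫ ≠ 0 := (hcne c (Set.mem_insert c _)).1
  have ha'0 : ⟪e0, a'⟫ ≠ 0 := ha.inner_e0_right_ne_zero ha1
  have he0 : ⟪e0, e0⟫ = 1 := by simp [e0]
  have he1 : ⟪e1, e1⟫ = 1 := by simp [e1]
  have h01 : (Aᴴ * A) 0 1 = 0 := by
    have h05 := horth 0 5 (by decide)
    simp only [Matrix.cons_val, inner_prod3, inner_appM_appM, he0, mul_one, hc0,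
      mul_eq_zero, or_false] at h05
    simpa [e0, e1] using h05
  have haMa' : star a.ofLp ⬝ᵥ ((Aᴴ * A) *ᵥ a'.ofLp) = 0 := by
    simpa only [Matrix.cons_val, inner_prod3, inner_appM_appM, he0, he1, mul_one]
      using horth 1 2 (by decide)
  have haa' : star a.ofLp ⬝ᵥ a'.ofLp = 0 := by
    rw [dotProduct_comm, ← EuclideanSpace.inner_eq_star_dotProduct]
    exact ha.2.2
  simp only [e0, EuclideanSpace.inner_single_left, map_one, one_mul] at ha0 ha'0
  exact ⟨_, Matrix.eq_smul_one_of_dotProduct_mulVec_eq_zero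
    (Matrix.isHermitian_conjTranspose_mul_self A) h01 ha0 ha'0 haa' haMa'⟩
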